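/- For every real α with α ≠ 1, there exist a finite set V, a symmetric submodular function f : 2^V → ℝ, and an α-ordering (v_1, …, v_n) of V with respect to f such that (v_{n−1}, v_n) is not a flat pair with respect to f. -/

import Mathlib

open Finset

def Submodular {V : Type*} [DecidableEq V] [Fintype V] (f : Finset V → ℝ) : Prop :=
  ∀ X Y : Finset V, f X + f Y ≥ f (X ∪ Y) + f (X ∩ Y)

def prefSet {V : Type*} [DecidableEq V] {n : ℕ} (v : Fin n → V) (i : Fin n) : Finset V :=
  (Finset.univ.filter (fun k : Fin n => k < i)).image v

def IsAlphaOrdering {V : Type*} [DecidableEq V] {n : ℕ} (α : ℝ)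
    (f : Finset V → ℝ) (v : Fin n → V) : Prop :=
  ∀ i j : Fin n, i ≤ j →
    f (insert (v i) (prefSet v i)) + α * f {v i} ≤
      f (insert (v j) (prefSet v i)) + α * f {v j}

def FlatPair {V : Type*} [DecidableEq V] [Fintype V]
    (f : Finset V → ℝ) (u w : V) : Prop :=
  ∀ X : Finset V, X ⊂ Finset.univ → (X ∩ ({u, w} : Finset V)).card = 1 →
    ∀ hX : X.Nonempty, X.inf' hX (fun x => f {x}) ≤ f X

/-!
The cut function of a graph with nonnegative edge weights is symmetric and submodular. On four
vertices `0, 1, 2, 3`, the identity ordering is an `α`-ordering as soon as six linear inequalities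
in the edge weights hold, and `(2, 3)` fails to be flat once the cut of `{1, 2}` is lighter than
both cuts `{1}` and `{2}`. For each of the regimes `α < -1`, `-1 ≤ α < 1`, `1 < α` an explicit
choice of weights meets all these constraints; for `α ≥ -1` the weights are scaled so that the
constraint comparing the insertions of `1` and `3` after `0` is tight.
-/

section CutFunction

variable {V : Type*} [DecidableEq V]

noncomputable def edgeCut (i j : V) (X : Finset V) : ℝ :=
  if (i ∈ X ↔ j ∈ X) then 0 else 1

lemma edgeCut_compl [Fintype V] (i j : V) (X : Finset V) : edgeCut i j Xᶜ = edgeCut i j X := by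
  simp [edgeCut, not_iff_not]

lemma edgeCut_union_add_edgeCut_inter_le (i j : V) (X Y : Finset V) :
    edgeCut i j (X ∪ Y) + edgeCut i j (X ∩ Y) ≤ edgeCut i j X + edgeCut i j Y := by
  unfold edgeCut
  by_cases hiX : i ∈ X <;> by_cases hiY : i ∈ Y <;> by_cases hjX : j ∈ X <;>
    by_cases hjY : j ∈ Y <;> simp [hiX, hiY, hjX, hjY]

variable [Fintype V]

noncomputable def cutFn (w : V → V → ℝ) (X : Finset V) : ℝ :=
  ∑ i, ∑ j, w i j * edgeCut i j X

lemma cutFn_compl (w : V → V → ℝ) (X : Finset V) : cutFn w Xᶜ = cutFn w X := by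
  simp only [cutFn, edgeCut_compl]

lemma submodular_cutFn {w : V → V → ℝ} (hw : ∀ i j, 0 ≤ w i j) :
    Submodular (cutFn w) := by
  intro X Y
  simp only [cutFn, ge_iff_le, ← Finset.sum_add_distrib, ← mul_add]
  exact Finset.sum_le_sum fun i _ => Finset.sum_le_sum fun j _ =>
    mul_le_mul_of_nonneg_left (edgeCut_union_add_edgeCut_inter_le i j X Y) (hw i j)

end CutFunction

def HasNonflatAlphaOrdering (α : ℝ) : Prop :=
  ∃ (n : ℕ) (hn : 2 ≤ n) (f : Finset (Fin n) → ℝ) (v : Fin n → Fin n),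
    (∀ X : Finset (Fin n), f X = f Xᶜ) ∧ Submodular f ∧
    Function.Bijective v ∧ IsAlphaOrdering α f v ∧
    ¬ FlatPair f (v ⟨n - 2, Nat.sub_lt (by omega) two_pos⟩)
      (v ⟨n - 1, Nat.sub_lt (by omega) one_pos⟩)

section FourVertices

variable (a b c d e g : ℝ)

def graphWeights : Fin 4 → Fin 4 → ℝ :=
  ![![0, a, b, c], ![0, 0, d, e], ![0, 0, 0, g], ![0, 0, 0, 0]]

lemma graphWeights_nonneg (ha : 0 ≤ a) (hb : 0 ≤ b) (hc : 0 ≤ c) (hd : 0 ≤ d) (he : 0 ≤ e)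
    (hg : 0 ≤ g) (i j : Fin 4) : 0 ≤ graphWeights a b c d e g i j := by
  fin_cases i <;> fin_cases j <;> simp [graphWeights, *]

variable {a b c d e g}

lemma isAlphaOrdering_cutFn_graphWeights {α : ℝ}
    (h01 : (1 + α) * (a + b + c) ≤ (1 + α) * (a + d + e))
    (h02 : (1 + α) * (a + b + c) ≤ (1 + α) * (b + d + g))
    (h03 : (1 + α) * (a + b + c) ≤ (1 + α) * (c + e + g))
    (h12 : b + c + d + e + α * (a + d + e) ≤ a + c + d + g + α * (b + d + g))
    (h13 : b + c + d + e + α * (a + d + e) ≤ a + b + e + g + α * (c + e + g))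
    (h23 : (1 - α) * (c + e + g) ≤ (1 - α) * (b + d + g)) :
    IsAlphaOrdering α (cutFn (graphWeights a b c d e g)) id := by
  intro i j hij
  fin_cases i <;> fin_cases j <;>
    simp (config := { decide := true }) [cutFn, Fin.sum_univ_four, edgeCut, graphWeights,
      prefSet, Fin.le_def] at hij ⊢ <;>
    linarith

lemma not_flatPair_cutFn_graphWeights (h1 : a + b + e + g < a + d + e)
    (h2 : a + b + e + g < b + d + g) :
    ¬ FlatPair (cutFn (graphWeights a b c d e g)) 2 3 := by
  intro hflat
  have hmin := hflat {1, 2} (by decide) (by decide) ⟨1, by simp⟩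
  simp (config := { decide := true }) [Finset.inf'_insert, cutFn, Fin.sum_univ_four, edgeCut,
    graphWeights] at hmin
  rcases hmin with h | h <;> linarith

end FourVertices

lemma hasNonflatAlphaOrdering_of_weights {α a b c d e g : ℝ}
    (ha : 0 ≤ a) (hb : 0 ≤ b) (hc : 0 ≤ c) (hd : 0 ≤ d) (he : 0 ≤ e) (hg : 0 ≤ g)
    (h01 : (1 + α) * (a + b + c) ≤ (1 + α) * (a + d + e))
    (h02 : (1 + α) * (a + b + c) ≤ (1 + α) * (b + d + g))
    (h03 : (1 + α) * (a + b + c) ≤ (1 + α) * (c + e + g))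
    (h12 : b + c + d + e + α * (a + d + e) ≤ a + c + d + g + α * (b + d + g))
    (h13 : b + c + d + e + α * (a + d + e) ≤ a + b + e + g + α * (c + e + g))
    (h23 : (1 - α) * (c + e + g) ≤ (1 - α) * (b + d + g))
    (hflat1 : a + b + e + g < a + d + e) (hflat2 : a + b + e + g < b + d + g) :
    HasNonflatAlphaOrdering α :=
  ⟨4, by norm_num, cutFn (graphWeights a b c d e g), id, fun X => (cutFn_compl _ X).symm,
    submodular_cutFn (graphWeights_nonneg a b c d e g ha hb hc hd he hg), Function.bijective_id,
    isAlphaOrdering_cutFn_graphWeights h01 h02 h03 h12 h13 h23,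
    not_flatPair_cutFn_graphWeights hflat1 hflat2⟩

lemma hasNonflatAlphaOrdering_of_lt_neg_one {α : ℝ} (hα : α < -1) :
    HasNonflatAlphaOrdering α := by
  refine hasNonflatAlphaOrdering_of_weights (a := 2) (b := 2) (c := 1 - α) (d := 1 - α)
    (e := 0) (g := 0) ?_ ?_ ?_ ?_ ?_ ?_ ?_ ?_ ?_ ?_ ?_ ?_ ?_ ?_ <;> nlinarith

lemma hasNonflatAlphaOrdering_of_mem_Ico {α : ℝ} (h₁ : -1 ≤ α) (h₂ : α < 1) :
    HasNonflatAlphaOrdering α := by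
  set s := (1 + α) / (1 - α)
  have hs : 0 ≤ s := div_nonneg (by linarith) (by linarith)
  have hs_mul : s * (1 - α) = 1 + α := div_mul_cancel₀ _ (by linarith)
  refine hasNonflatAlphaOrdering_of_weights (a := s) (b := 0) (c := 0) (d := s + 1)
    (e := 0) (g := s) ?_ ?_ ?_ ?_ ?_ ?_ ?_ ?_ ?_ ?_ ?_ ?_ ?_ ?_ <;> nlinarith

lemma hasNonflatAlphaOrdering_of_one_lt {α : ℝ} (hα : 1 < α) :
    HasNonflatAlphaOrdering α := by
  set m := (α + 1) / (α - 1)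
  have hm : 1 ≤ m := by rw [le_div_iff₀ (by linarith)]; linarith
  have hm_mul : m * (α - 1) = α + 1 := div_mul_cancel₀ _ (by linarith)
  refine hasNonflatAlphaOrdering_of_weights (a := 0) (b := 0) (c := m) (d := (m + 1) / 2)
    (e := (m - 1) / 2) (g := (m - 1) / 2) ?_ ?_ ?_ ?_ ?_ ?_ ?_ ?_ ?_ ?_ ?_ ?_ ?_ ?_ <;> nlinarith

/-- Proposition 6.3: for any `α ≠ 1` there are a finite ground set, a symmetric
submodular function `f`, and an `α`-ordering of the ground set with respect to `f`
whose last two elements do not form a flat pair. -/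
theorem stmt_10 (α : ℝ) (hα : α ≠ 1) :
    ∃ (n : ℕ) (hn : 2 ≤ n) (f : Finset (Fin n) → ℝ) (v : Fin n → Fin n),
      (∀ X : Finset (Fin n), f X = f Xᶜ) ∧ Submodular f ∧
      Function.Bijective v ∧ IsAlphaOrdering α f v ∧
      ¬ FlatPair f (v ⟨n - 2, by omega⟩) (v ⟨n - 1, by omega⟩) := by
  rcases hα.lt_or_gt with hlt | hgt
  · rcases lt_or_ge α (-1) with hlt' | hge
    · exact hasNonflatAlphaOrdering_of_lt_neg_one hlt'
    · exact hasNonflatAlphaOrdering_of_mem_Ico hge hlt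
  · exact hasNonflatAlphaOrdering_of_one_lt hgt
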